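/- Let $G$ and $H$ be simple graphs with vertices $v \in V(G)$ and $u \in V(H)$ such that $d_G(v) = 1$ and $d_H(u) = 1$. Then the edge-joint $G \rightsquigarrow_{vu} H$ (the disjoint union of $G$ and $H$ together with the added edge $vu$) satisfies $firr_t(G \rightsquigarrow_{vu} H) = firr_t(G \cup H)$. -/

import Mathlib

open SimpleGraph Finset

attribute [local instance] Classical.propDecidable

/-- The edge-joint `G ⤳_{vu} H` of two disjoint simple graphs: the disjoint union of `G` and
`H` together with the added edge `vu`, where `v ∈ V(G)` and `u ∈ V(H)`. -/
def SimpleGraph.edgeJoint {α β : Type*} (G : SimpleGraph α) (H : SimpleGraph β)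
    (v : α) (u : β) : SimpleGraph (α ⊕ β) where
  Adj x y := (G ⊕g H).Adj x y ∨ (x = Sum.inl v ∧ y = Sum.inr u) ∨
    (x = Sum.inr u ∧ y = Sum.inl v)
  symm := by
    constructor
    intro x y h
    rcases h with h | ⟨h1, h2⟩ | ⟨h1, h2⟩
    · exact Or.inl ((G ⊕g H).adj_symm h)
    · exact Or.inr (Or.inr ⟨h2, h1⟩)
    · exact Or.inr (Or.inl ⟨h2, h1⟩)
  loopless := by
    constructor
    intro x h
    rcases h with h | ⟨h1, h2⟩ | ⟨h1, h2⟩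
    · exact (G ⊕g H).irrefl h
    · rw [h1] at h2; simp at h2
    · rw [h1] at h2; simp at h2

/-
Adding the edge `vu` raises the degrees of `v` and `u` from `1` to `2` and changes no other
degree. Since `f₁ = f₂`, every Fibonacci weight `f_{d(x)}` is unchanged, hence so is every
term of the double sum.
-/

namespace SimpleGraph

variable {α β : Type*} (G : SimpleGraph α) (H : SimpleGraph β)

lemma edgeJoint_adj (v : α) (u : β) {x y : α ⊕ β} :
    (G.edgeJoint H v u).Adj x y ↔
      (G ⊕g H).Adj x y ∨ (x = .inl v ∧ y = .inr u) ∨ (x = .inr u ∧ y = .inl v) :=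
  Iff.rfl

variable [Fintype α] [Fintype β]

lemma neighborFinset_sum_inl (a : α) :
    (G ⊕g H).neighborFinset (.inl a) = (G.neighborFinset a).map Function.Embedding.inl := by
  ext (x | y) <;> simp

lemma neighborFinset_sum_inr (b : β) :
    (G ⊕g H).neighborFinset (.inr b) = (H.neighborFinset b).map Function.Embedding.inr := by
  ext (x | y) <;> simp

lemma degree_sum_inl (a : α) : (G ⊕g H).degree (.inl a) = G.degree a := by
  rw [← card_neighborFinset_eq_degree, neighborFinset_sum_inl, card_map,
    card_neighborFinset_eq_degree]

lemma degree_sum_inr (b : β) : (G ⊕g H).degree (.inr b) = H.degree b := by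
  rw [← card_neighborFinset_eq_degree, neighborFinset_sum_inr, card_map,
    card_neighborFinset_eq_degree]

variable (v : α) (u : β)

lemma edgeJoint_neighborFinset_inl :
    (G.edgeJoint H v u).neighborFinset (.inl v) =
      insert (.inr u) ((G ⊕g H).neighborFinset (.inl v)) := by
  ext (x | y) <;> simp [edgeJoint_adj, or_comm]

lemma edgeJoint_neighborFinset_inr :
    (G.edgeJoint H v u).neighborFinset (.inr u) =
      insert (.inl v) ((G ⊕g H).neighborFinset (.inr u)) := by
  ext (x | y) <;> simp [edgeJoint_adj, or_comm]

lemma edgeJoint_degree_inl : (G.edgeJoint H v u).degree (.inl v) = G.degree v + 1 := by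
  rw [← card_neighborFinset_eq_degree, edgeJoint_neighborFinset_inl,
    card_insert_of_notMem (by simp), card_neighborFinset_eq_degree, degree_sum_inl]

lemma edgeJoint_degree_inr : (G.edgeJoint H v u).degree (.inr u) = H.degree u + 1 := by
  rw [← card_neighborFinset_eq_degree, edgeJoint_neighborFinset_inr,
    card_insert_of_notMem (by simp), card_neighborFinset_eq_degree, degree_sum_inr]

lemma edgeJoint_degree_of_ne {x : α ⊕ β} (hxv : x ≠ .inl v) (hxu : x ≠ .inr u) :
    (G.edgeJoint H v u).degree x = (G ⊕g H).degree x := by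
  rw [← card_neighborFinset_eq_degree, ← card_neighborFinset_eq_degree]
  congr 1
  ext y
  simp [edgeJoint_adj, hxv, hxu]

lemma fib_degree_edgeJoint_of_degree_one (hv : G.degree v = 1) (hu : H.degree u = 1)
    (x : α ⊕ β) :
    Nat.fib ((G.edgeJoint H v u).degree x) = Nat.fib ((G ⊕g H).degree x) := by
  by_cases hxv : x = .inl v
  · rw [hxv, edgeJoint_degree_inl, degree_sum_inl, hv]; rfl
  by_cases hxu : x = .inr u
  · rw [hxu, edgeJoint_degree_inr, degree_sum_inr, hu]; rfl
  rw [edgeJoint_degree_of_ne G H v u hxv hxu]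

end SimpleGraph

/-- If `v ∈ V(G)` and `u ∈ V(H)` both have degree `1`, then the edge-joint
`G ⤳_{vu} H` has the same total fibonaccian irregularity as the disjoint union `G ∪ H`
(expressed as half of the double sum of `|f_{d(u)} - f_{d(v)}|`). -/
theorem firr_edgeJoint_of_degree_one {α β : Type*} [Fintype α] [Fintype β]
    (G : SimpleGraph α) (H : SimpleGraph β) (v : α) (u : β)
    (hv : G.degree v = 1) (hu : H.degree u = 1) :
    ∑ x : α ⊕ β, ∑ y : α ⊕ β,
        |(Nat.fib ((G.edgeJoint H v u).degree x) : ℤ) -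
          (Nat.fib ((G.edgeJoint H v u).degree y) : ℤ)| =
      ∑ x : α ⊕ β, ∑ y : α ⊕ β,
        |(Nat.fib ((G ⊕g H).degree x) : ℤ) - (Nat.fib ((G ⊕g H).degree y) : ℤ)| := by
  simp only [fib_degree_edgeJoint_of_degree_one G H v u hv hu]
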